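/- arXiv:math/9811071 — 4 statements merged into one kernel-verified Lean document; each statement's English description precedes it below -/
import Mathlib

section
/- The face-centered cubic packing achieves the density π/√18: the set Λ = {√2·(a,b,c) : a,b,c ∈ ℤ, a+b+c even} has pairwise distances at least 2, and the ratio vol((⋃_{x∈Λ} B(x,1)) ∩ B(0,R)) / vol(B(0,R)) tends to π/√18 as R → ∞. -/
/-!
The fcc packing is the lattice spanned by `√2 (1,1,0)`, `√2 (0,1,1)`, `√2 (1,0,1)`. Its nonzero
vectors are `√2` times integer vectors with even coordinate sum, so they have length at least `2`;
its fundamental domain has volume `|det| = 4√2`.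

For any lattice whose points are `2`-separated, the unit balls and the translates of the
fundamental domain centred at the lattice points of `ball 0 r` are equinumerous, so the volumes
of their unions are in the ratio `vol (ball 0 1) : covolume`. These translates cover
`ball 0 (r - d)` and lie in `ball 0 (r + d)`, where `d = ∑ ‖bᵢ‖` bounds the norms of points of
the fundamental domain. Hence the density in `ball 0 R` is squeezed between
`vol (ball 0 1) / covolume · ((R ∓ (1 + d)) / R) ^ n`, and for fcc the limit is
`(4π/3) / (4√2) = π / √18`.
-/

open MeasureTheory Filter Metric Real

/-- The face-centered cubic packing: centers at `√2 • (a, b, c)` with `a + b + c` even. -/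
def fccPacking : Set (EuclideanSpace ℝ (Fin 3)) :=
  {x | ∃ a b c : ℤ, Even (a + b + c) ∧
    x = (EuclideanSpace.equiv (Fin 3) ℝ).symm
      ![Real.sqrt 2 * a, Real.sqrt 2 * b, Real.sqrt 2 * c]}

open Submodule Module ENNReal Topology Pointwise

theorem Int.two_le_sq_add_sq_add_sq {a b c : ℤ} (hev : Even (a + b + c))
    (hne : a ≠ 0 ∨ b ≠ 0 ∨ c ≠ 0) : 2 ≤ a ^ 2 + b ^ 2 + c ^ 2 := by
  have hpos : 0 < a ^ 2 + b ^ 2 + c ^ 2 := by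
    rcases hne with h | h | h <;> positivity
  obtain ⟨k, hk⟩ : Even (a ^ 2 + b ^ 2 + c ^ 2) := by simpa [parity_simps] using hev
  omega

theorem Metric.biUnion_inter_ball_subset_inter_ball {α : Type*} [PseudoMetricSpace α]
    (X : Set α) (p : α) (r R : ℝ) :
    ⋃ x ∈ X ∩ ball p (R - r), ball x r ⊆ (⋃ x ∈ X, ball x r) ∩ ball p R := by
  simp only [Set.iUnion_subset_iff]
  rintro x ⟨hX, hx⟩ y hy
  refine ⟨Set.mem_biUnion hX hy, ?_⟩
  rw [mem_ball] at hx hy ⊢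
  linarith [dist_triangle y x p]

theorem Metric.inter_ball_subset_biUnion_inter_ball {α : Type*} [PseudoMetricSpace α]
    (X : Set α) (p : α) (r R : ℝ) :
    (⋃ x ∈ X, ball x r) ∩ ball p R ⊆ ⋃ x ∈ X ∩ ball p (R + r), ball x r := by
  rintro y ⟨hy, hyR⟩
  obtain ⟨x, hX, hyx⟩ := Set.mem_iUnion₂.mp hy
  refine Set.mem_biUnion ⟨hX, ?_⟩ hyx
  rw [mem_ball] at hyx hyR ⊢
  linarith [dist_triangle x y p, dist_comm x y]

theorem MeasureTheory.measure_biUnion_vadd {G : Type*} [AddGroup G] [MeasurableSpace G]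
    [MeasurableAdd G] (μ : Measure G) [μ.IsAddLeftInvariant] {S A : Set G} (hS : S.Countable)
    (hA : MeasurableSet A) (hd : S.PairwiseDisjoint (· +ᵥ A)) :
    μ (⋃ x ∈ S, x +ᵥ A) = S.encard * μ A := by
  rw [measure_biUnion hS hd fun x _ => hA.const_vadd x]
  simp only [measure_vadd, ENNReal.tsum_const]
  rfl

theorem MeasureTheory.Measure.addHaar_ball_div_addHaar_ball {E : Type*} [NormedAddCommGroup E]
    [NormedSpace ℝ E] [MeasurableSpace E] [BorelSpace E] [FiniteDimensional ℝ E]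
    (μ : Measure E) [μ.IsAddHaarMeasure] (x y : E) {r R : ℝ} (hr : 0 < r) (hR : 0 < R) :
    μ (ball x r) / μ (ball y R) = ENNReal.ofReal ((r / R) ^ finrank ℝ E) := by
  rw [μ.addHaar_ball_of_pos x hr, μ.addHaar_ball_of_pos y hR,
    ENNReal.mul_div_mul_right _ _ (measure_ball_pos μ 0 one_pos).ne' measure_ball_lt_top.ne,
    ← ENNReal.ofReal_div_of_pos (by positivity), div_pow]

theorem tendsto_ofReal_add_div_self_pow (c : ℝ) (n : ℕ) :
    Tendsto (fun R : ℝ => ENNReal.ofReal (((R + c) / R) ^ n)) atTop (𝓝 1) := by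
  have h : Tendsto (fun R : ℝ => 1 + c / R) atTop (𝓝 1) := by
    simpa using (tendsto_const_nhds (x := (1 : ℝ))).add
      ((tendsto_const_nhds (x := c)).div_atTop tendsto_id)
  have h' : Tendsto (fun R : ℝ => (R + c) / R) atTop (𝓝 1) := by
    refine h.congr' ?_
    filter_upwards [eventually_ne_atTop 0] with R hR
    rw [add_div, div_self hR]
  simpa using ENNReal.tendsto_ofReal (h'.pow n)

noncomputable def localDensity {E : Type*} [SeminormedAddCommGroup E] [MeasurableSpace E]
    (μ : Measure E) (X : Set E) (R : ℝ) : ℝ≥0∞ :=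
  μ ((⋃ x ∈ X, ball x 1) ∩ ball 0 R) / μ (ball 0 R)

namespace ZSpan

variable {E ι : Type*} [NormedAddCommGroup E] [NormedSpace ℝ E] [Fintype ι] (b : Basis ι ℝ E)

theorem norm_le_of_mem_fundamentalDomain {x : E} (hx : x ∈ fundamentalDomain b) :
    ‖x‖ ≤ ∑ i, ‖b i‖ :=
  fract_eq_self.mpr hx ▸ norm_fract_le b x

theorem pairwiseDisjoint_vadd_fundamentalDomain :
    (span ℤ (Set.range b) : Set E).PairwiseDisjoint (· +ᵥ fundamentalDomain b) := by
  intro x hx y hy hxy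
  refine Set.disjoint_left.mpr fun z hzx hzy => hxy ?_
  rw [Set.mem_vadd_set_iff_neg_vadd_mem] at hzx hzy
  have := (exist_unique_vadd_mem_fundamentalDomain b z).unique
    (y₁ := ⟨-x, neg_mem hx⟩) (y₂ := ⟨-y, neg_mem hy⟩) hzx hzy
  simpa using this

theorem ball_subset_biUnion_vadd_fundamentalDomain (r : ℝ) :
    ball 0 (r - ∑ i, ‖b i‖) ⊆
      ⋃ x ∈ (span ℤ (Set.range b) : Set E) ∩ ball 0 r, x +ᵥ fundamentalDomain b := by
  intro y hy
  refine Set.mem_biUnion (x := (floor b y : E)) ⟨(floor b y).2, ?_⟩ ?_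
  · rw [mem_ball_zero_iff] at hy ⊢
    calc ‖(floor b y : E)‖ = ‖y - fract b y‖ := by rw [fract_apply]; abel_nf
      _ ≤ ‖y‖ + ‖fract b y‖ := norm_sub_le _ _
      _ < r := by linarith [norm_fract_le b y]
  · rw [Set.mem_vadd_set_iff_neg_vadd_mem, vadd_eq_add, neg_add_eq_sub, ← fract_apply]
    exact fract_mem_fundamentalDomain b y

theorem biUnion_vadd_fundamentalDomain_subset_ball (r : ℝ) :
    ⋃ x ∈ (span ℤ (Set.range b) : Set E) ∩ ball 0 r, x +ᵥ fundamentalDomain b ⊆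
      ball 0 (r + ∑ i, ‖b i‖) := by
  simp only [Set.iUnion_subset_iff]
  rintro x ⟨-, hx⟩ _ ⟨f, hf, rfl⟩
  rw [mem_ball_zero_iff] at hx ⊢
  calc ‖x +ᵥ f‖ ≤ ‖x‖ + ‖f‖ := norm_add_le _ _
    _ < r + ∑ i, ‖b i‖ := by linarith [norm_le_of_mem_fundamentalDomain b hf]

variable [MeasurableSpace E] [BorelSpace E] [FiniteDimensional ℝ E] (μ : Measure E)
  [μ.IsAddHaarMeasure]

theorem measure_biUnion_ball_eq
    (hsep : (span ℤ (Set.range b) : Set E).Pairwise (2 ≤ dist · ·))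
    {S : Set E} (hS : S ⊆ span ℤ (Set.range b)) :
    μ (⋃ x ∈ S, ball x 1) =
      μ (ball 0 1) / μ (fundamentalDomain b) * μ (⋃ x ∈ S, x +ᵥ fundamentalDomain b) := by
  have hSc : S.Countable := (Set.countable_coe_iff.mp
    (inferInstanceAs (Countable (span ℤ (Set.range b))))).mono hS
  have hballs : μ (⋃ x ∈ S, ball x 1) = S.encard * μ (ball 0 1) := by
    rw [show ⋃ x ∈ S, ball x 1 = ⋃ x ∈ S, x +ᵥ ball (0 : E) 1 by simp only [vadd_ball_zero]]
    refine measure_biUnion_vadd μ hSc measurableSet_ball fun x hx y hy hxy => ?_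
    simp only [Function.onFun, vadd_ball_zero]
    exact ball_disjoint_ball (by linarith [hsep (hS hx) (hS hy) hxy])
  rw [hballs, measure_biUnion_vadd μ hSc (fundamentalDomain_measurableSet b)
      ((pairwiseDisjoint_vadd_fundamentalDomain b).subset hS),
    mul_left_comm, ENNReal.div_mul_cancel
      (measure_fundamentalDomain_ne_zero b) (fundamentalDomain_isBounded b).measure_lt_top.ne]

theorem mul_ofReal_le_localDensity
    (hsep : (span ℤ (Set.range b) : Set E).Pairwise (2 ≤ dist · ·))
    {R : ℝ} (hR : 1 + ∑ i, ‖b i‖ < R) :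
    μ (ball 0 1) / μ (fundamentalDomain b) *
        ENNReal.ofReal (((R - (1 + ∑ i, ‖b i‖)) / R) ^ finrank ℝ E) ≤
      localDensity μ (span ℤ (Set.range b) : Set E) R := by
  have hc : 0 ≤ ∑ i, ‖b i‖ := by positivity
  set L : Set E := ↑(span ℤ (Set.range b))
  have key : μ (ball 0 1) / μ (fundamentalDomain b) * μ (ball 0 (R - (1 + ∑ i, ‖b i‖))) ≤
      μ ((⋃ x ∈ L, ball x 1) ∩ ball 0 R) :=
    calc _ ≤ μ (ball 0 1) / μ (fundamentalDomain b) *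
            μ (⋃ x ∈ L ∩ ball 0 (R - 1), x +ᵥ fundamentalDomain b) := by
          rw [← sub_sub]
          exact mul_le_mul_right
            (measure_mono (ball_subset_biUnion_vadd_fundamentalDomain b _)) _
      _ = μ (⋃ x ∈ L ∩ ball 0 (R - 1), ball x 1) :=
          (measure_biUnion_ball_eq b μ hsep Set.inter_subset_left).symm
      _ ≤ _ := measure_mono (biUnion_inter_ball_subset_inter_ball L 0 1 R)
  calc _ = μ (ball 0 1) / μ (fundamentalDomain b) * μ (ball 0 (R - (1 + ∑ i, ‖b i‖))) /
        μ (ball 0 R) := by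
        rw [mul_div_assoc, μ.addHaar_ball_div_addHaar_ball 0 0 (by linarith) (by linarith)]
    _ ≤ _ := ENNReal.div_le_div_right key _

theorem localDensity_le_mul_ofReal
    (hsep : (span ℤ (Set.range b) : Set E).Pairwise (2 ≤ dist · ·))
    {R : ℝ} (hR : 0 < R) :
    localDensity μ (span ℤ (Set.range b) : Set E) R ≤
      μ (ball 0 1) / μ (fundamentalDomain b) *
        ENNReal.ofReal (((R + (1 + ∑ i, ‖b i‖)) / R) ^ finrank ℝ E) := by
  have hc : 0 ≤ ∑ i, ‖b i‖ := by positivity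
  set L : Set E := ↑(span ℤ (Set.range b))
  have key : μ ((⋃ x ∈ L, ball x 1) ∩ ball 0 R) ≤
      μ (ball 0 1) / μ (fundamentalDomain b) * μ (ball 0 (R + (1 + ∑ i, ‖b i‖))) :=
    calc _ ≤ μ (⋃ x ∈ L ∩ ball 0 (R + 1), ball x 1) :=
          measure_mono (inter_ball_subset_biUnion_inter_ball L 0 1 R)
      _ = μ (ball 0 1) / μ (fundamentalDomain b) *
            μ (⋃ x ∈ L ∩ ball 0 (R + 1), x +ᵥ fundamentalDomain b) :=
          measure_biUnion_ball_eq b μ hsep Set.inter_subset_left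
      _ ≤ _ := by
          rw [← add_assoc]
          exact mul_le_mul_right (measure_mono (biUnion_vadd_fundamentalDomain_subset_ball b _)) _
  calc _ ≤ μ (ball 0 1) / μ (fundamentalDomain b) * μ (ball 0 (R + (1 + ∑ i, ‖b i‖))) /
        μ (ball 0 R) := ENNReal.div_le_div_right key _
    _ = _ := by rw [mul_div_assoc, μ.addHaar_ball_div_addHaar_ball 0 0 (by linarith) hR]

theorem tendsto_localDensity
    (hsep : (span ℤ (Set.range b) : Set E).Pairwise (2 ≤ dist · ·)) :
    Tendsto (localDensity μ (span ℤ (Set.range b) : Set E)) atTop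
      (𝓝 (μ (ball 0 1) / μ (fundamentalDomain b))) := by
  have h (c : ℝ) := ENNReal.Tendsto.const_mul (tendsto_ofReal_add_div_self_pow c (finrank ℝ E))
    (Or.inl one_ne_zero) (a := μ (ball 0 1) / μ (fundamentalDomain b))
  rw [mul_one] at h
  refine tendsto_of_tendsto_of_tendsto_of_le_of_le'
    (h (-(1 + ∑ i, ‖b i‖))) (h (1 + ∑ i, ‖b i‖)) ?_ ?_
  · filter_upwards [eventually_gt_atTop (1 + ∑ i, ‖b i‖)] with R hR
    simpa only [sub_eq_add_neg] using mul_ofReal_le_localDensity b μ hsep hR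
  · filter_upwards [eventually_gt_atTop 0] with R hR
    exact localDensity_le_mul_ofReal b μ hsep hR

end ZSpan

noncomputable def fccVec : Fin 3 → EuclideanSpace ℝ (Fin 3) :=
  ![!₂[√2, √2, 0], !₂[0, √2, √2], !₂[√2, 0, √2]]

theorem sum_zsmul_fccVec (c : Fin 3 → ℤ) :
    ∑ i, c i • fccVec i = !₂[√2 * (c 0 + c 2), √2 * (c 0 + c 1), √2 * (c 1 + c 2)] := by
  ext j
  fin_cases j <;> simp [fccVec, Fin.sum_univ_three, ← Int.cast_smul_eq_zsmul ℝ] <;> ring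

theorem fccPacking_eq_span : fccPacking = span ℤ (Set.range fccVec) := by
  ext x
  simp only [fccPacking, Set.mem_ofPred_eq, SetLike.mem_coe, mem_span_range_iff_exists_fun,
    sum_zsmul_fccVec]
  constructor
  · rintro ⟨a, b, c, ⟨t, ht⟩, rfl⟩
    have ht' : (a + b + c : ℝ) = t + t := by exact_mod_cast ht
    refine ⟨![t - c, t - a, t - b], ?_⟩
    ext j
    fin_cases j <;> simp <;> linear_combination -ht'
  · rintro ⟨c, rfl⟩
    exact ⟨c 0 + c 2, c 0 + c 1, c 1 + c 2, ⟨c 0 + c 1 + c 2, by ring⟩, by push_cast; rfl⟩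

theorem det_fccVec : (EuclideanSpace.basisFun (Fin 3) ℝ).toBasis.det fccVec = 4 * √2 := by
  rw [Basis.det_apply, Matrix.det_fin_three]
  simp only [fccVec, Basis.toMatrix_apply, OrthonormalBasis.coe_toBasis_repr_apply,
    EuclideanSpace.basisFun_repr, Matrix.cons_val_zero, Matrix.cons_val_one, Matrix.cons_val,
    mul_self_sqrt zero_le_two, mul_zero, zero_mul, sub_zero, add_zero]
  ring

theorem isUnit_det_fccVec : IsUnit ((EuclideanSpace.basisFun (Fin 3) ℝ).toBasis.det fccVec) := by
  rw [det_fccVec, isUnit_iff_ne_zero]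
  positivity

noncomputable def fccBasis : Basis (Fin 3) ℝ (EuclideanSpace ℝ (Fin 3)) :=
  have h := (Basis.is_basis_iff_det _).mpr isUnit_det_fccVec
  Basis.mk h.1 h.2.ge

theorem coe_fccBasis : ⇑fccBasis = fccVec := by simp [fccBasis]

theorem volume_fundamentalDomain_fccBasis :
    volume (ZSpan.fundamentalDomain fccBasis) = ENNReal.ofReal (4 * √2) := by
  rw [measure_congr (ZSpan.fundamentalDomain_ae_parallelepiped fccBasis volume),
    ← (EuclideanSpace.basisFun (Fin 3) ℝ).addHaar_eq_volume, coe_fccBasis,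
    Measure.addHaar_parallelepiped, det_fccVec, abs_of_pos (by positivity)]

theorem volume_ball_div_volume_fundamentalDomain_fccBasis :
    volume (ball (0 : EuclideanSpace ℝ (Fin 3)) 1) / volume (ZSpan.fundamentalDomain fccBasis) =
      ENNReal.ofReal (π / √18) := by
  have h18 : √18 = 3 * √2 := by
    rw [show (18 : ℝ) = 3 ^ 2 * 2 by norm_num, sqrt_mul (by positivity), sqrt_sq (by norm_num)]
  rw [EuclideanSpace.volume_ball_fin_three, volume_fundamentalDomain_fccBasis, ENNReal.ofReal_one,
    one_pow, one_mul, ← ENNReal.ofReal_div_of_pos (by positivity), h18]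
  congr 1
  field_simp

theorem two_le_norm_of_mem_fccPacking {x : EuclideanSpace ℝ (Fin 3)} (hx : x ∈ fccPacking)
    (hx₀ : x ≠ 0) : 2 ≤ ‖x‖ := by
  obtain ⟨a, b, c, hev, rfl⟩ := hx
  have habc : a ≠ 0 ∨ b ≠ 0 ∨ c ≠ 0 := by
    by_contra! h
    obtain ⟨rfl, rfl, rfl⟩ := h
    exact hx₀ (by ext i; fin_cases i <;> simp)
  have h := Int.two_le_sq_add_sq_add_sq hev habc
  rw [EuclideanSpace.norm_eq, Real.le_sqrt' two_pos]
  have h' : (2 : ℝ) ≤ a ^ 2 + b ^ 2 + c ^ 2 := by exact_mod_cast h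
  simp only [PiLp.continuousLinearEquiv_symm_apply, norm_eq_abs, sq_abs, Fin.sum_univ_three,
    Matrix.cons_val_zero, Matrix.cons_val_one, Matrix.cons_val, mul_pow, sq_sqrt zero_le_two]
  linarith

theorem fccPacking_pairwise_two_le_dist : fccPacking.Pairwise (2 ≤ dist · ·) := by
  intro x hx y hy hxy
  rw [dist_eq_norm]
  refine two_le_norm_of_mem_fccPacking ?_ (sub_ne_zero.mpr hxy)
  rw [fccPacking_eq_span] at hx hy ⊢
  exact sub_mem hx hy

/-- The face-centered cubic packing is a packing (pairwise distances at least 2) and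
achieves the density `π / √18`. -/
theorem fcc_achieves_kepler_density :
    (∀ x ∈ fccPacking, ∀ y ∈ fccPacking, x ≠ y → 2 ≤ dist x y) ∧
    Tendsto (fun R : ℝ =>
        volume ((⋃ x ∈ fccPacking, ball x 1) ∩ ball (0 : EuclideanSpace ℝ (Fin 3)) R) /
          volume (ball (0 : EuclideanSpace ℝ (Fin 3)) R)) atTop
      (nhds (ENNReal.ofReal (π / Real.sqrt 18))) := by
  have hsep := fccPacking_pairwise_two_le_dist
  refine ⟨hsep, ?_⟩
  rw [fccPacking_eq_span, ← coe_fccBasis] at hsep ⊢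
  exact volume_ball_div_volume_fundamentalDomain_fccBasis ▸
    ZSpan.tendsto_localDensity fccBasis volume hsep
end

section
/- The two-dimensional kissing number is exactly 6: any set S ⊆ ℝ² of points each at distance exactly 2 from the origin and with pairwise distances at least 2 has at most 6 elements, and there exists such a set with exactly 6 elements. -/
/-!
Two points of norm `r > 0` whose arguments differ by less than `π / 3` are at distance less
than `r`, since the squared distance is `2 r² (1 - cos (α - β))`. Cutting the plane into six
sectors of angle `π / 3` by argument, a configuration has at most one point per sector.
Conversely the vertices of the regular hexagon `r e^{kπi/3}` are pairwise at distance at least `r`.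
-/

open Real Complex

theorem Complex.dist_ofReal_mul_exp_mul_I_sq (r α β : ℝ) :
    dist (r * exp (α * I)) (r * exp (β * I)) ^ 2 = 2 * r ^ 2 * (1 - Real.cos (α - β)) := by
  rw [dist_eq, ← normSq_eq_norm_sq, normSq_apply]
  simp only [sub_re, sub_im, re_ofReal_mul, im_ofReal_mul, exp_ofReal_mul_I_re, exp_ofReal_mul_I_im]
  rw [Real.cos_sub]
  linear_combination r ^ 2 * (Real.sin_sq_add_cos_sq α + Real.sin_sq_add_cos_sq β)

theorem Real.half_lt_cos_of_abs_lt {θ : ℝ} (h : |θ| < π / 3) : 1 / 2 < Real.cos θ := by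
  rw [← Real.cos_abs, ← Real.cos_pi_div_three]
  exact Real.cos_lt_cos_of_nonneg_of_le_pi (abs_nonneg θ) (by linarith [pi_pos]) h

theorem Real.cos_le_half_of_mem_Icc {θ : ℝ} (h₁ : π / 3 ≤ θ) (h₂ : θ ≤ 5 * π / 3) :
    Real.cos θ ≤ 1 / 2 := by
  rw [← Real.cos_pi_div_three]
  rcases le_total θ π with hθ | hθ
  · exact Real.cos_le_cos_of_nonneg_of_le_pi (by positivity) hθ h₁
  · rw [← Real.cos_two_pi_sub]
    exact Real.cos_le_cos_of_nonneg_of_le_pi (by positivity) (by linarith) (by linarith)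

theorem Complex.dist_lt_of_abs_arg_sub_lt {z w : ℂ} {r : ℝ} (hr : 0 < r) (hz : ‖z‖ = r)
    (hw : ‖w‖ = r) (h : |arg z - arg w| < π / 3) : dist z w < r := by
  rw [← norm_mul_exp_arg_mul_I z, ← norm_mul_exp_arg_mul_I w, hz, hw,
    ← pow_lt_pow_iff_left₀ dist_nonneg hr.le two_ne_zero, dist_ofReal_mul_exp_mul_I_sq]
  nlinarith [mul_pos (pow_pos hr 2) (sub_pos.2 (half_lt_cos_of_abs_lt h))]

/-- Since `arg z ∈ (-π, π]`, the index lies in `[0, 6)`. -/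
noncomputable def Complex.argSector (z : ℂ) : ℤ := ⌊(π - arg z) / (π / 3)⌋

theorem Complex.argSector_mem_Ico (z : ℂ) : argSector z ∈ Set.Ico 0 6 := by
  have hπ : 0 < π / 3 := by positivity
  constructor
  · exact Int.floor_nonneg.2 (div_nonneg (by linarith [arg_le_pi z]) hπ.le)
  · refine Int.floor_lt.2 ((div_lt_iff₀ hπ).2 ?_)
    push_cast
    linarith [neg_pi_lt_arg z]

theorem Complex.abs_arg_sub_lt_of_argSector_eq {z w : ℂ} (h : argSector z = argSector w) :
    |arg z - arg w| < π / 3 := by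
  have hπ : 0 < π / 3 := by positivity
  have := Int.abs_sub_lt_one_of_floor_eq_floor h
  rwa [← sub_div, sub_sub_sub_cancel_left, abs_div, abs_of_pos hπ, div_lt_one hπ,
    abs_sub_comm] at this

def IsKissingConfiguration {E : Type*} [SeminormedAddCommGroup E] (r : ℝ) (S : Set E) : Prop :=
  (∀ x ∈ S, ‖x‖ = r) ∧ S.Pairwise fun x y ↦ r ≤ dist x y

namespace IsKissingConfiguration

theorem image {R E F : Type*} [Semiring R] [SeminormedAddCommGroup E] [SeminormedAddCommGroup F]
    [Module R E] [Module R F] {r : ℝ} {S : Set E} (h : IsKissingConfiguration r S)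
    (f : E →ₗᵢ[R] F) : IsKissingConfiguration r (f '' S) := by
  refine ⟨?_, ?_⟩
  · rintro _ ⟨x, hx, rfl⟩
    rw [f.norm_map]
    exact h.1 x hx
  · rintro _ ⟨x, hx, rfl⟩ _ ⟨y, hy, rfl⟩ hne
    rw [f.dist_map]
    exact h.2 hx hy (ne_of_apply_ne f hne)

theorem finite_and_ncard_le_six {r : ℝ} {S : Set ℂ} (h : IsKissingConfiguration r S)
    (hr : 0 < r) : S.Finite ∧ S.ncard ≤ 6 := by
  have hmaps : Set.MapsTo argSector S (Set.Ico 0 6) := fun z _ ↦ argSector_mem_Ico z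
  have hinj : S.InjOn argSector := fun z hz w hw hzw ↦ by
    by_contra hne
    exact (h.2 hz hw hne).not_gt <| dist_lt_of_abs_arg_sub_lt hr (h.1 z hz) (h.1 w hw)
      (abs_arg_sub_lt_of_argSector_eq hzw)
  refine ⟨Set.Finite.of_injOn hmaps hinj (Set.finite_Ico 0 6), ?_⟩
  calc S.ncard ≤ (Set.Ico (0 : ℤ) 6).ncard := Set.ncard_le_ncard_of_injOn _ hmaps hinj
    _ = 6 := by rw [← Finset.coe_Ico, Set.ncard_coe_finset]; rfl

end IsKissingConfiguration

noncomputable def hexagonVertex (r : ℝ) (k : Fin 6) : ℂ :=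
  r * exp (((k : ℕ) * π / 3 : ℝ) * I)

theorem le_dist_hexagonVertex_of_lt {r : ℝ} (hr : 0 ≤ r) {k l : Fin 6} (hlk : l < k) :
    r ≤ dist (hexagonVertex r k) (hexagonVertex r l) := by
  have hl : ((l : ℕ) : ℝ) + 1 ≤ (k : ℕ) := by exact_mod_cast hlk
  have hk : ((k : ℕ) : ℝ) ≤ 5 := by exact_mod_cast Nat.le_of_lt_succ k.isLt
  have hcos : Real.cos ((k : ℕ) * π / 3 - (l : ℕ) * π / 3) ≤ 1 / 2 :=
    cos_le_half_of_mem_Icc (by nlinarith [pi_pos])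
      (by nlinarith [pi_pos, Nat.cast_nonneg (α := ℝ) l])
  rw [← pow_le_pow_iff_left₀ hr dist_nonneg two_ne_zero, hexagonVertex, hexagonVertex,
    dist_ofReal_mul_exp_mul_I_sq]
  nlinarith [mul_nonneg (sq_nonneg r) (sub_nonneg.2 hcos)]

theorem le_dist_hexagonVertex {r : ℝ} (hr : 0 ≤ r) {k l : Fin 6} (hkl : k ≠ l) :
    r ≤ dist (hexagonVertex r k) (hexagonVertex r l) := by
  rcases hkl.lt_or_gt with h | h
  · rw [dist_comm]
    exact le_dist_hexagonVertex_of_lt hr h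
  · exact le_dist_hexagonVertex_of_lt hr h

theorem hexagonVertex_injective {r : ℝ} (hr : 0 < r) : Function.Injective (hexagonVertex r) :=
  fun k l hkl ↦ by_contra fun hne ↦ by
    have := le_dist_hexagonVertex hr.le hne
    rw [hkl, dist_self] at this
    linarith

theorem isKissingConfiguration_range_hexagonVertex {r : ℝ} (hr : 0 ≤ r) :
    IsKissingConfiguration r (Set.range (hexagonVertex r)) := by
  refine ⟨?_, ?_⟩
  · rintro _ ⟨k, rfl⟩
    rw [hexagonVertex, norm_mul, norm_exp_ofReal_mul_I, mul_one, norm_real, norm_of_nonneg hr]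
  · rintro _ ⟨k, rfl⟩ _ ⟨l, rfl⟩ hne
    exact le_dist_hexagonVertex hr (ne_of_apply_ne _ hne)

/-- The two-dimensional kissing number is exactly 6: any set of points of norm 2 in ℝ²
with pairwise distances at least 2 has at most 6 elements, and some such set has
exactly 6 elements. -/
theorem kissing_number_dim2_eq_six :
    (∀ S : Set (EuclideanSpace ℝ (Fin 2)),
      (∀ x ∈ S, ‖x‖ = 2) → (∀ x ∈ S, ∀ y ∈ S, x ≠ y → 2 ≤ dist x y) →
      S.Finite ∧ S.ncard ≤ 6) ∧
    (∃ S : Set (EuclideanSpace ℝ (Fin 2)),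
      S.ncard = 6 ∧ (∀ x ∈ S, ‖x‖ = 2) ∧
      (∀ x ∈ S, ∀ y ∈ S, x ≠ y → 2 ≤ dist x y)) := by
  let e : ℂ ≃ₗᵢ[ℝ] EuclideanSpace ℝ (Fin 2) := orthonormalBasisOneI.repr
  refine ⟨fun S hnorm hdist ↦ ?_, ⟨e '' Set.range (hexagonVertex 2), ?_⟩⟩
  · obtain ⟨hfin, hcard⟩ := (IsKissingConfiguration.image ⟨hnorm, hdist⟩
      e.symm.toLinearIsometry).finite_and_ncard_le_six two_pos
    rw [← e.toEquiv.image_symm_image S]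
    exact ⟨hfin.image e, (Set.ncard_image_of_injective _ e.injective).trans_le hcard⟩
  · obtain ⟨hnorm, hdist⟩ :=
      (isKissingConfiguration_range_hexagonVertex zero_le_two).image e.toLinearIsometry
    refine ⟨?_, hnorm, fun x hx y hy ↦ hdist hx hy⟩
    rw [Set.ncard_image_of_injective _ e.injective,
      Set.ncard_range_of_injective (hexagonVertex_injective two_pos), Nat.card_fin]
end

section
/- Lagrange's theorem on densest lattice packings in the plane: every full-rank lattice Λ ⊆ ℝ² all of whose nonzero vectors have norm at least 2 has covolume at least 2√3; equivalently, the density π/(covolume) of the associated lattice packing of unit disks is at most π/√12. -/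
/-!
Lagrange–Gauss reduction. Among the lattice vectors `x` having a partner `y ∈ L` with
`|ω x y| = covolume L` (for instance the first vector of a basis), take one of minimal norm, and
replace its partner by `w = y - round (⟪x, y⟫ / ‖x‖²) • x`. Then `w` is again such a vector (with
partner `x`), so `‖x‖ ≤ ‖w‖`, and `|⟪x, w⟫| ≤ ‖x‖² / 2`. Hence
`covolume² = ‖x‖² ‖w‖² - ⟪x, w⟫² ≥ (3/4) ‖x‖⁴ ≥ 12`.
-/

open Real MeasureTheory Module RealInnerProductSpace

theorem Submodule.exists_forall_norm_le_of_subset {E : Type*} [NormedAddCommGroup E]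
    [ProperSpace E] (L : Submodule ℤ E) [DiscreteTopology L] {s : Set E} (hsL : s ⊆ L)
    (hs : s.Nonempty) : ∃ x ∈ s, ∀ y ∈ s, ‖x‖ ≤ ‖y‖ := by
  obtain ⟨x₀, hx₀⟩ := hs
  have hfin : (Metric.closedBall 0 ‖x₀‖ ∩ s).Finite :=
    (Metric.finite_isBounded_inter_isClosed DiscreteTopology.isDiscrete
      Metric.isBounded_closedBall L.toAddSubgroup.isClosed_of_discrete).subset
      (Set.inter_subset_inter_right _ hsL)
  obtain ⟨x, ⟨hx_ball, hxs⟩, hx_min⟩ :=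
    Set.exists_min_image _ (‖·‖) hfin ⟨x₀, mem_closedBall_zero_iff.2 le_rfl, hx₀⟩
  refine ⟨x, hxs, fun y hy => ?_⟩
  by_cases hy₀ : ‖y‖ ≤ ‖x₀‖
  · exact hx_min y ⟨mem_closedBall_zero_iff.2 hy₀, hy⟩
  · exact (mem_closedBall_zero_iff.1 hx_ball).trans (le_of_not_ge hy₀)

theorem abs_inner_sub_round_smul_le {F : Type*} [NormedAddCommGroup F] [InnerProductSpace ℝ F]
    (x y : F) : |⟪x, y - (round (⟪x, y⟫ / ‖x‖ ^ 2) : ℝ) • x⟫| ≤ ‖x‖ ^ 2 / 2 := by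
  rcases eq_or_ne x 0 with rfl | hx
  · simp
  set t := ⟪x, y⟫ / ‖x‖ ^ 2
  have : ⟪x, y - (round t : ℝ) • x⟫ = (t - round t) * ‖x‖ ^ 2 := by
    rw [inner_sub_right, real_inner_smul_right, real_inner_self_eq_norm_sq, sub_mul,
      div_mul_cancel₀ _ (by positivity)]
  rw [this, abs_mul, abs_of_nonneg (sq_nonneg ‖x‖)]
  calc |t - round t| * ‖x‖ ^ 2 ≤ 1 / 2 * ‖x‖ ^ 2 := by gcongr; exact abs_sub_round t
    _ = ‖x‖ ^ 2 / 2 := by ring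

section TwoDim

variable {E : Type*} [NormedAddCommGroup E] [InnerProductSpace ℝ E] [Fact (finrank ℝ E = 2)]

attribute [local instance] FiniteDimensional.of_fact_finrank_eq_two

namespace Orientation

variable (o : Orientation ℝ E (Fin 2))

local notation "ω" => o.areaForm

theorem twelve_le_areaForm_sq_of_reduced {x y : E} (hx : 2 ≤ ‖x‖) (hxy : ‖x‖ ≤ ‖y‖)
    (h : |⟪x, y⟫| ≤ ‖x‖ ^ 2 / 2) : 12 ≤ ω x y ^ 2 := by
  have hinner : ⟪x, y⟫ ^ 2 ≤ (‖x‖ ^ 2 / 2) ^ 2 := by rw [← sq_abs]; gcongr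
  have hx4 : 4 ≤ ‖x‖ ^ 2 := by nlinarith
  calc 12 ≤ 3 / 4 * (‖x‖ ^ 2) ^ 2 := by nlinarith
    _ = ‖x‖ ^ 2 * ‖x‖ ^ 2 - (‖x‖ ^ 2 / 2) ^ 2 := by ring
    _ ≤ ‖x‖ ^ 2 * ‖y‖ ^ 2 - ⟪x, y⟫ ^ 2 := by gcongr
    _ = ω x y ^ 2 := by linarith [o.inner_sq_add_areaForm_sq x y]

theorem covolume_eq_abs_areaForm [MeasurableSpace E] [BorelSpace E] (L : Submodule ℤ E)
    [DiscreteTopology L] [IsZLattice ℝ L] (b : Basis (Fin 2) ℤ L) :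
    ZLattice.covolume L = |ω (b 0) (b 1)| := by
  let f := o.finOrthonormalBasis two_pos Fact.out
  rw [ZLattice.covolume_eq_det_mul_measureReal L volume b f.toBasis,
    measureReal_congr (ZSpan.fundamentalDomain_ae_parallelepiped _ _),
    OrthonormalBasis.coe_toBasis, measureReal_def, f.volume_parallelepiped,
    ENNReal.toReal_one, mul_one, areaForm_to_volumeForm, o.volumeForm_robust' f]
  congr 2
  ext i
  fin_cases i <;> rfl

end Orientation

theorem ZLattice.two_mul_sqrt_three_le_covolume [MeasurableSpace E] [BorelSpace E]
    (L : Submodule ℤ E) [DiscreteTopology L] [IsZLattice ℝ L]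
    (hL : ∀ v ∈ L, v ≠ 0 → 2 ≤ ‖v‖) : 2 * √3 ≤ ZLattice.covolume L := by
  let o : Orientation ℝ E (Fin 2) := (finBasisOfFinrankEq ℝ E Fact.out).orientation
  let b : Basis (Fin 2) ℤ L := finBasisOfFinrankEq ℤ L (by rw [ZLattice.rank ℝ L]; exact Fact.out)
  set c := ZLattice.covolume L
  have hc : 0 < c := ZLattice.covolume_pos L volume
  obtain ⟨x, ⟨hxL, y, hyL, hxy⟩, hx_min⟩ := L.exists_forall_norm_le_of_subset
    (s := {x | x ∈ L ∧ ∃ y ∈ L, |o.areaForm x y| = c}) (fun x hx => hx.1)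
    ⟨b 0, (b 0).2, b 1, (b 1).2, (o.covolume_eq_abs_areaForm L b).symm⟩
  set w := y - (round (⟪x, y⟫ / ‖x‖ ^ 2) : ℝ) • x
  have hwL : w ∈ L := L.sub_mem hyL (by rw [Int.cast_smul_eq_zsmul]; exact L.smul_mem _ hxL)
  have hxw : |o.areaForm x w| = c := by simp [w, hxy]
  have hx0 : x ≠ 0 := by rintro rfl; simp at hxw; linarith
  have hxw_le : ‖x‖ ≤ ‖w‖ := hx_min w ⟨hwL, x, hxL, by rw [o.areaForm_swap, abs_neg, hxw]⟩
  have h12 := o.twelve_le_areaForm_sq_of_reduced (hL x hxL hx0) hxw_le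
    (abs_inner_sub_round_smul_le x y)
  rw [sq, ← abs_mul_abs_self, hxw] at h12
  nlinarith [sq_sqrt (show (0 : ℝ) ≤ 3 by norm_num), sqrt_nonneg 3]

end TwoDim

/-- Lagrange's theorem: a full-rank lattice in ℝ² whose nonzero vectors all have norm at
least 2 has covolume at least `2√3`; equivalently, the density of the associated lattice
packing of unit disks is at most `π / √12`. -/
theorem lagrange_densest_lattice_packing_dim2
    (L : Submodule ℤ (EuclideanSpace ℝ (Fin 2)))
    [DiscreteTopology L] [IsZLattice ℝ L]
    (hL : ∀ v ∈ L, v ≠ 0 → 2 ≤ ‖v‖) :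
    2 * Real.sqrt 3 ≤ ZLattice.covolume L ∧
    π / ZLattice.covolume L ≤ π / Real.sqrt 12 := by
  have : Fact (finrank ℝ (EuclideanSpace ℝ (Fin 2)) = 2) := ⟨finrank_euclideanSpace_fin⟩
  have hcov := ZLattice.two_mul_sqrt_three_le_covolume L hL
  have h12 : √12 = 2 * √3 := by
    rw [show (12 : ℝ) = 2 ^ 2 * 3 by norm_num, sqrt_mul (by positivity), sqrt_sq zero_le_two]
  refine ⟨hcov, ?_⟩
  rw [h12]
  gcongr
end

section
/- Gauss's theorem on densest lattice packings in three dimensions: every full-rank lattice Λ ⊆ ℝ³ all of whose nonzero vectors have norm at least 2 has covolume at least 4√2; equivalently, the density (4π/3)/(covolume) of the associated lattice packing of unit spheres is at most π/√18, the density of the face-centered cubic lattice. -/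
/-!
Choose a `ℤ`-basis `b₀, b₁, b₂` of the lattice of minimal total length `∑ ‖bᵢ‖`. Reordering it and
changing signs keeps it minimal, so we may assume `‖b₀‖ ≤ ‖b₁‖ ≤ ‖b₂‖` and `⟪b₀, b₁⟫, ⟪b₀, b₂⟫ ≥ 0`.
Minimality means that `bᵢ` cannot be shortened by adding to it an integer combination of the other
basis vectors; a handful of such combinations give Gauss's reduction conditions on the Gram matrix
`!![a, r, s; r, b, t; s, t, c]`, under which `a b c ≤ 2 det`. Indeed `2 det - a b c` is a concave
quadratic in each of `r`, `s`, `t` separately, so its minimum over the reduction domain is attained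
at a vertex, where it is checked directly. As `a, b, c ≥ 4` and `covolume² = det`, the covolume is
at least `√32 = 4√2`.
-/

open Real

theorem nonneg_of_concave_quadratic {f : ℝ → ℝ} (k m l : ℝ)
    (hf : ∀ x, f x = l + m * x - k * x ^ 2) (hk : 0 ≤ k) {p q x : ℝ} (hpx : p ≤ x) (hxq : x ≤ q)
    (hp : 0 ≤ f p) (hq : 0 ≤ f q) : 0 ≤ f x := by
  rw [hf] at hp hq ⊢
  rcases hpx.eq_or_lt with rfl | hpx'
  · exact hp
  -- `(q - p) f(x) = (q - x) f(p) + (x - p) f(q) + k (q - x) (x - p) (q - p)`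
  have key : 0 ≤ (q - p) * (l + m * x - k * x ^ 2) := by
    nlinarith [mul_nonneg (sub_nonneg.2 hxq) hp, mul_nonneg (sub_nonneg.2 hpx) hq,
      mul_nonneg (mul_nonneg hk (sub_nonneg.2 hxq))
        (mul_nonneg (sub_nonneg.2 hpx) (sub_nonneg.2 (hpx.trans hxq)))]
  exact (mul_nonneg_iff_of_pos_left (by linarith)).1 key

def gaussGap (a b c r s t : ℝ) : ℝ :=
  a * b * c + 4 * r * s * t - 2 * a * t ^ 2 - 2 * b * s ^ 2 - 2 * c * r ^ 2

section GaussGap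

variable {a b c r s t : ℝ}

theorem two_mul_det_eq_gaussGap_add :
    2 * !![a, r, s; r, b, t; s, t, c].det = gaussGap a b c r s t + a * b * c := by
  simp only [Matrix.det_fin_three, Fin.isValue, Matrix.of_apply, Matrix.cons_val',
    Matrix.cons_val_zero, Matrix.cons_val_fin_one, Matrix.cons_val_one, Matrix.cons_val, gaussGap]
  ring

theorem gaussGap_half_zero_half_nonneg (ha : 0 ≤ a) (hab : a ≤ b) (hbc : b ≤ c) :
    0 ≤ gaussGap a b c (a / 2) 0 (b / 2) := by
  unfold gaussGap
  nlinarith [mul_nonneg ha (mul_nonneg (by linarith : (0 : ℝ) ≤ c - b) (by linarith : (0 : ℝ) ≤ b)),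
    mul_nonneg ha (mul_nonneg (by linarith : (0 : ℝ) ≤ c) (by linarith : (0 : ℝ) ≤ b - a))]

theorem gaussGap_zero_half_half_nonneg (ha : 0 ≤ a) (hab : a ≤ b) (hbc : b ≤ c) :
    0 ≤ gaussGap a b c 0 (a / 2) (b / 2) := by
  unfold gaussGap
  nlinarith [mul_nonneg (mul_nonneg ha (by linarith : (0 : ℝ) ≤ b))
    (by linarith : (0 : ℝ) ≤ 2 * c - a - b)]

theorem gaussGap_nonneg_of_r_eq_zero (ha : 0 ≤ a) (hab : a ≤ b) (hbc : b ≤ c) (hs0 : 0 ≤ s)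
    (hs : 2 * s ≤ a) (ht : t ^ 2 = (b / 2) ^ 2) : 0 ≤ gaussGap a b c 0 s t := by
  have := gaussGap_zero_half_half_nonneg ha hab hbc
  unfold gaussGap at this ⊢
  nlinarith [mul_nonneg (by linarith : (0 : ℝ) ≤ b)
    (mul_nonneg (by linarith : (0 : ℝ) ≤ a - 2 * s) (by linarith : (0 : ℝ) ≤ a + 2 * s))]

theorem gaussGap_nonneg_of_r_eq_half (ha : 0 ≤ a) (hab : a ≤ b) (hbc : b ≤ c) (hs0 : 0 ≤ s)
    (hs : 2 * s ≤ a) : 0 ≤ gaussGap a b c (a / 2) s (b / 2) := by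
  have h := gaussGap_half_zero_half_nonneg ha hab hbc
  refine nonneg_of_concave_quadratic (f := fun s => gaussGap a b c (a / 2) s (b / 2))
    (2 * b) (a * b) (a * b * c - a * b ^ 2 / 2 - a ^ 2 * c / 2)
    (fun s => by unfold gaussGap; ring) (by linarith) hs0 (by linarith : s ≤ a / 2) h ?_
  unfold gaussGap at h ⊢
  linarith

theorem gaussGap_nonneg_of_r_add_s_eq_half (ha : 0 ≤ a) (hab : a ≤ b) (hbc : b ≤ c) (hs0 : 0 ≤ s)
    (hs : 2 * s ≤ a) : 0 ≤ gaussGap a b c (a / 2 - s) s (-b / 2) := by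
  have h₁ := gaussGap_half_zero_half_nonneg ha hab hbc
  have h₂ := gaussGap_zero_half_half_nonneg ha hab hbc
  unfold gaussGap at h₁ h₂
  refine nonneg_of_concave_quadratic (f := fun s => gaussGap a b c (a / 2 - s) s (-b / 2)) (2 * c)
    (2 * a * c - a * b) (a * b * c - a * b ^ 2 / 2 - a ^ 2 * c / 2)
    (fun s => by unfold gaussGap; ring)
    (by linarith) hs0 (by linarith : s ≤ a / 2) ?_ ?_ <;> unfold gaussGap <;> linarith

theorem gaussGap_nonneg_of_t_eq_half (ha : 0 ≤ a) (hab : a ≤ b) (hbc : b ≤ c) (hr0 : 0 ≤ r)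
    (hr : 2 * r ≤ a) (hs0 : 0 ≤ s) (hs : 2 * s ≤ a) : 0 ≤ gaussGap a b c r s (b / 2) :=
  nonneg_of_concave_quadratic (f := fun r => gaussGap a b c r s (b / 2)) (2 * c) (2 * b * s)
    (a * b * c - a * b ^ 2 / 2 - 2 * b * s ^ 2) (fun r => by unfold gaussGap; ring) (by linarith)
    hr0 (by linarith : r ≤ a / 2) (gaussGap_nonneg_of_r_eq_zero ha hab hbc hs0 hs rfl)
    (gaussGap_nonneg_of_r_eq_half ha hab hbc hs0 hs)

theorem gaussGap_nonneg_of_t_eq_neg_half (ha : 0 ≤ a) (hab : a ≤ b) (hbc : b ≤ c) (hr0 : 0 ≤ r)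
    (hs0 : 0 ≤ s) (hrs : 2 * (r + s) ≤ a) : 0 ≤ gaussGap a b c r s (-b / 2) :=
  nonneg_of_concave_quadratic (f := fun r => gaussGap a b c r s (-b / 2)) (2 * c) (-2 * b * s)
    (a * b * c - a * b ^ 2 / 2 - 2 * b * s ^ 2) (fun r => by unfold gaussGap; ring) (by linarith)
    hr0 (by linarith : r ≤ a / 2 - s)
    (gaussGap_nonneg_of_r_eq_zero ha hab hbc hs0 (by linarith) (by ring))
    (gaussGap_nonneg_of_r_add_s_eq_half ha hab hbc hs0 (by linarith))

theorem gaussGap_nonneg_of_t_eq_sub (ha : 0 ≤ a) (hab : a ≤ b) (hbc : b ≤ c) (hr : 2 * r ≤ a)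
    (hs0 : 0 ≤ s) (hs : 2 * s ≤ a) (hrs : a ≤ 2 * (r + s)) :
    0 ≤ gaussGap a b c r s (r + s - (a + b) / 2) := by
  have h₁ := gaussGap_nonneg_of_r_add_s_eq_half ha hab hbc hs0 hs
  have h₂ := gaussGap_nonneg_of_r_eq_half ha hab hbc hs0 hs
  refine nonneg_of_concave_quadratic (f := fun r => gaussGap a b c r s (r + s - (a + b) / 2))
    (2 * a + 2 * c - 4 * s) (4 * (s - (a + b) / 2) * (s - a))
    (a * b * c - 2 * a * (s - (a + b) / 2) ^ 2 - 2 * b * s ^ 2) (fun r => by unfold gaussGap; ring)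
    (by linarith) (by linarith : a / 2 - s ≤ r) (by linarith : r ≤ a / 2) ?_ ?_
  · convert h₁ using 2; ring
  · -- at `r = a / 2` the gap is symmetric in `t` about `s / 2`, so `t = s - b / 2` acts as `b / 2`
    convert h₂ using 1
    unfold gaussGap
    ring

theorem gaussGap_nonneg (ha : 0 ≤ a) (hab : a ≤ b) (hbc : b ≤ c) (hr0 : 0 ≤ r) (hr : 2 * r ≤ a)
    (hs0 : 0 ≤ s) (hs : 2 * s ≤ a) (ht : |2 * t| ≤ b) (hrst : 2 * (r + s - t) ≤ a + b) :
    0 ≤ gaussGap a b c r s t := by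
  obtain ⟨ht₁, ht₂⟩ := abs_le.1 ht
  have hquad : ∀ t, gaussGap a b c r s t =
      a * b * c - 2 * b * s ^ 2 - 2 * c * r ^ 2 + 4 * r * s * t - 2 * a * t ^ 2 := fun t => by
    unfold gaussGap; ring
  have hupper := gaussGap_nonneg_of_t_eq_half ha hab hbc hr0 hr hs0 hs
  rcases le_total (2 * (r + s)) a with hrs | hrs
  · exact nonneg_of_concave_quadratic _ _ _ hquad (by linarith) (by linarith : -b / 2 ≤ t)
      (by linarith : t ≤ b / 2) (gaussGap_nonneg_of_t_eq_neg_half ha hab hbc hr0 hs0 hrs) hupper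
  · exact nonneg_of_concave_quadratic _ _ _ hquad (by linarith)
      (by linarith : r + s - (a + b) / 2 ≤ t) (by linarith : t ≤ b / 2)
      (gaussGap_nonneg_of_t_eq_sub ha hab hbc hr hs0 hs hrs) hupper

theorem prod_diag_le_two_mul_det_of_reduced (ha : 0 ≤ a) (hab : a ≤ b) (hbc : b ≤ c)
    (hr0 : 0 ≤ r) (hr : 2 * r ≤ a) (hs0 : 0 ≤ s) (hs : 2 * s ≤ a) (ht : |2 * t| ≤ b)
    (hrst : 2 * (r + s - t) ≤ a + b) :
    a * b * c ≤ 2 * !![a, r, s; r, b, t; s, t, c].det := by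
  rw [two_mul_det_eq_gaussGap_add]
  linarith [gaussGap_nonneg ha hab hbc hr0 hr hs0 hs ht hrst]

end GaussGap

open Module

theorem Module.Basis.exists_eq_update_of_repr_eq_one {ι R M : Type*} [DecidableEq ι] [CommRing R]
    [AddCommGroup M] [Module R M] (b : Basis ι R M) {i : ι} {x : M} (hx : b.repr x i = 1) :
    ∃ b' : Basis ι R M, ⇑b' = Function.update b i x := by
  have hw : b.coord i (x - b i) = 0 := by simp [hx]
  refine ⟨b.map (LinearEquiv.transvection hw), funext fun j => ?_⟩
  rcases eq_or_ne j i with rfl | hj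
  · simp [LinearMap.transvection.apply]
  · simp [LinearMap.transvection.apply, hj]

section Lattice

variable {E : Type*} [NormedAddCommGroup E] {L : Submodule ℤ E} {ι : Type*} [Fintype ι]

def IsMinimalBasis (b : Basis ι ℤ L) : Prop :=
  ∀ b' : Basis ι ℤ L, ∑ i, ‖(b i : E)‖ ≤ ∑ i, ‖(b' i : E)‖

theorem finite_setOf_norm_le_of_discreteTopology [ProperSpace E] [DiscreteTopology L] (C : ℝ) :
    {x : L | ‖(x : E)‖ ≤ C}.Finite := by
  have hL : IsClosed (L : Set E) := AddSubgroup.isClosed_of_discrete (H := L.toAddSubgroup)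
  refine (Metric.finite_isBounded_inter_isClosed (isDiscrete_iff_discreteTopology.2 ‹_›)
    (Metric.isBounded_closedBall (x := 0) (r := C)) hL).preimage Subtype.val_injective.injOn
    |>.subset fun x hx => ?_
  simpa using hx

theorem finite_setOf_sum_norm_basis_le [ProperSpace E] [DiscreteTopology L] (C : ℝ) :
    {b : Basis ι ℤ L | ∑ i, ‖(b i : E)‖ ≤ C}.Finite := by
  refine ((Set.Finite.pi' fun _ => finite_setOf_norm_le_of_discreteTopology C).preimage
    DFunLike.coe_injective.injOn).subset fun b hb i => ?_
  exact (Finset.single_le_sum (fun j _ => norm_nonneg (b j : E)) (Finset.mem_univ i)).trans hb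

theorem exists_isMinimalBasis [ProperSpace E] [DiscreteTopology L] (b : Basis ι ℤ L) :
    ∃ b₀ : Basis ι ℤ L, IsMinimalBasis b₀ := by
  have : Northcott fun b : Basis ι ℤ L => ∑ i, ‖(b i : E)‖ := ⟨finite_setOf_sum_norm_basis_le⟩
  obtain ⟨b₀, -, h⟩ :=
    Northcott.exists_min_image (fun b : Basis ι ℤ L => ∑ i, ‖(b i : E)‖) Set.univ ⟨b, trivial⟩
  exact ⟨b₀, fun b => h b trivial⟩

theorem IsMinimalBasis.norm_le_of_repr_eq_one [DecidableEq ι] {b : Basis ι ℤ L}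
    (hb : IsMinimalBasis b) {i : ι} {x : L} (hx : b.repr x i = 1) : ‖(b i : E)‖ ≤ ‖(x : E)‖ := by
  obtain ⟨b', hb'⟩ := b.exists_eq_update_of_repr_eq_one hx
  have hrest : ∑ j ∈ Finset.univ.erase i, ‖(b' j : E)‖ = ∑ j ∈ Finset.univ.erase i, ‖(b j : E)‖ :=
    Finset.sum_congr rfl fun j hj => by rw [hb', Function.update_of_ne (Finset.ne_of_mem_erase hj)]
  have h := hb b'
  rw [← Finset.add_sum_erase _ _ (Finset.mem_univ i),
    ← Finset.add_sum_erase _ _ (Finset.mem_univ i), hrest, hb', Function.update_self] at h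
  linarith

theorem norm_coe_units_smul (u : ℤˣ) (x : L) : ‖((u • x : L) : E)‖ = ‖(x : E)‖ := by
  rcases Int.units_eq_one_or u with rfl | rfl <;> simp

theorem IsMinimalBasis.reindex_unitsSMul {b : Basis ι ℤ L} (hb : IsMinimalBasis b) (σ : ι ≃ ι)
    (ε : ι → ℤˣ) : IsMinimalBasis ((b.reindex σ).unitsSMul ε) := fun b' => by
  simp only [Basis.unitsSMul_apply, norm_coe_units_smul, Basis.reindex_apply]
  exact ((Equiv.sum_comp σ.symm fun i => ‖(b i : E)‖).trans_le (hb b'))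

end Lattice

section InnerProduct

variable {E : Type*} [NormedAddCommGroup E] [InnerProductSpace ℝ E] {L : Submodule ℤ E}

open scoped RealInnerProductSpace

theorem exists_isMinimalBasis_monotone_norm_inner_nonneg [ProperSpace E] [DiscreteTopology L]
    {n : ℕ} (b : Basis (Fin (n + 1)) ℤ L) :
    ∃ b₀ : Basis (Fin (n + 1)) ℤ L, IsMinimalBasis b₀ ∧
      Monotone (fun i => ‖(b₀ i : E)‖) ∧ ∀ i, 0 ≤ ⟪(b₀ 0 : E), b₀ i⟫ := by
  obtain ⟨b₁, hmin⟩ := exists_isMinimalBasis b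
  set σ := Tuple.sort fun i => ‖(b₁ i : E)‖
  let ε : Fin (n + 1) → ℤˣ := fun i => if 0 ≤ ⟪(b₁ (σ 0) : E), b₁ (σ i)⟫ then 1 else -1
  have hε₀ : ε 0 = 1 := if_pos real_inner_self_nonneg
  refine ⟨(b₁.reindex σ.symm).unitsSMul ε, hmin.reindex_unitsSMul σ.symm ε, ?_, fun i => ?_⟩
  · intro i j hij
    simp only [Basis.unitsSMul_apply, norm_coe_units_smul, Basis.reindex_apply, Equiv.symm_symm]
    exact Tuple.monotone_sort (fun i => ‖(b₁ i : E)‖) hij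
  · simp only [Basis.unitsSMul_apply, Basis.reindex_apply, Equiv.symm_symm, hε₀, one_smul,
      Units.smul_def, Submodule.coe_smul, inner_smul_right_eq_smul]
    dsimp only [ε]
    split_ifs with h
    · simpa using h
    · simpa using (not_le.1 h).le

theorem IsMinimalBasis.prod_norm_sq_le_two_mul_det_gram {v : Basis (Fin 3) ℤ L}
    (hv : IsMinimalBasis v) (hmono : Monotone fun i => ‖(v i : E)‖)
    (hinner : ∀ i, 0 ≤ ⟪(v 0 : E), v i⟫) :
    ‖(v 0 : E)‖ ^ 2 * ‖(v 1 : E)‖ ^ 2 * ‖(v 2 : E)‖ ^ 2 ≤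
      2 * (Matrix.gram ℝ fun i => (v i : E)).det := by
  have hred : ∀ {i : Fin 3} {y : L}, v.repr y i = 1 → ‖(v i : E)‖ ^ 2 ≤ ‖(y : E)‖ ^ 2 :=
    fun hy => pow_le_pow_left₀ (norm_nonneg _) (hv.norm_le_of_repr_eq_one hy) 2
  have hsub10 := hred (i := 1) (y := v 1 - v 0) (by simp)
  have hsub20 := hred (i := 2) (y := v 2 - v 0) (by simp)
  have hsub21 := hred (i := 2) (y := v 2 - v 1) (by simp)
  have hadd21 := hred (i := 2) (y := v 2 + v 1) (by simp)
  have h210 := hred (i := 2) (y := v 2 + v 1 - v 0) (by simp)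
  simp only [Submodule.coe_add, Submodule.coe_sub] at hsub10 hsub20 hsub21 hadd21 h210
  set x : Fin 3 → E := fun i => (v i : E)
  have hgram : Matrix.gram ℝ x = !![‖x 0‖ ^ 2, ⟪x 0, x 1⟫, ⟪x 0, x 2⟫;
      ⟪x 0, x 1⟫, ‖x 1‖ ^ 2, ⟪x 1, x 2⟫; ⟪x 0, x 2⟫, ⟪x 1, x 2⟫, ‖x 2‖ ^ 2] := by
    ext i j
    fin_cases i <;> fin_cases j <;> simp [Matrix.gram_apply] <;> exact real_inner_comm _ _
  rw [hgram]
  refine prod_diag_le_two_mul_det_of_reduced (by positivity)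
    (pow_le_pow_left₀ (norm_nonneg _) (hmono (by decide : (0 : Fin 3) ≤ 1)) 2)
    (pow_le_pow_left₀ (norm_nonneg _) (hmono (by decide : (1 : Fin 3) ≤ 2)) 2)
    (hinner 1) ?_ (hinner 2) ?_ (abs_le.2 ⟨?_, ?_⟩) ?_
  · rw [norm_sub_sq_real, real_inner_comm] at hsub10
    linarith
  · rw [norm_sub_sq_real, real_inner_comm] at hsub20
    linarith
  · rw [norm_add_sq_real, real_inner_comm] at hadd21
    linarith
  · rw [norm_sub_sq_real, real_inner_comm] at hsub21
    linarith
  · rw [norm_sub_sq_real, norm_add_sq_real, inner_add_left, real_inner_comm (x 0),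
      real_inner_comm (x 0), real_inner_comm (x 1)] at h210
    linarith

end InnerProduct

open MeasureTheory in
theorem ZLattice.covolume_sq_eq_det_gram {E : Type*} [NormedAddCommGroup E] [InnerProductSpace ℝ E]
    [FiniteDimensional ℝ E] [MeasurableSpace E] [BorelSpace E] (L : Submodule ℤ E)
    [DiscreteTopology L] [IsZLattice ℝ L] {ι : Type*} [Fintype ι] [DecidableEq ι]
    (b : Basis ι ℤ L) :
    covolume L ^ 2 = (Matrix.gram ℝ fun i => (b i : E)).det := by
  have hcard : Fintype.card ι = finrank ℝ E := by
    rw [← finrank_eq_card_basis b, ZLattice.rank ℝ L]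
  let e : OrthonormalBasis ι ℝ E :=
    (stdOrthonormalBasis ℝ E).reindex (Fintype.equivFinOfCardEq hcard).symm
  have hvol : volume.real (ZSpan.fundamentalDomain e.toBasis) = 1 := by
    rw [measureReal_congr (ZSpan.fundamentalDomain_ae_parallelepiped _ _),
      OrthonormalBasis.coe_toBasis, measureReal_def, e.volume_parallelepiped, ENNReal.toReal_one]
  rw [covolume_eq_det_mul_measureReal L volume b e.toBasis, hvol, mul_one, sq_abs,
    Matrix.gram_eq_conjTranspose_mul e, Matrix.det_mul, Matrix.det_conjTranspose, Basis.det_apply,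
    sq]
  rfl

/-- Gauss's theorem: a full-rank lattice in ℝ³ whose nonzero vectors all have norm at
least 2 has covolume at least `4√2`; equivalently, the density of the associated lattice
packing of unit spheres is at most `π / √18`, the density of the face-centered cubic
lattice. -/
theorem gauss_densest_lattice_packing_dim3
    (L : Submodule ℤ (EuclideanSpace ℝ (Fin 3)))
    [DiscreteTopology L] [IsZLattice ℝ L]
    (hL : ∀ v ∈ L, v ≠ 0 → 2 ≤ ‖v‖) :
    4 * Real.sqrt 2 ≤ ZLattice.covolume L ∧
    (4 * π / 3) / ZLattice.covolume L ≤ π / Real.sqrt 18 := by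
  obtain ⟨v, hmin, hmono, hinner⟩ := exists_isMinimalBasis_monotone_norm_inner_nonneg
    (finBasisOfFinrankEq ℤ L (by rw [ZLattice.rank ℝ L, finrank_euclideanSpace_fin]))
  have hsq : ∀ i, 4 ≤ ‖(v i : EuclideanSpace ℝ (Fin 3))‖ ^ 2 := fun i => by
    nlinarith [hL _ (v i).2 (by simpa using v.ne_zero i)]
  have hcov_sq : (4 * √2) ^ 2 ≤ ZLattice.covolume L ^ 2 := by
    rw [ZLattice.covolume_sq_eq_det_gram L v, mul_pow, sq_sqrt zero_le_two]
    have hgauss := hmin.prod_norm_sq_le_two_mul_det_gram hmono hinner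
    have hprod : 4 * 4 * 4 ≤ ‖(v 0 : EuclideanSpace ℝ (Fin 3))‖ ^ 2 *
        ‖(v 1 : EuclideanSpace ℝ (Fin 3))‖ ^ 2 * ‖(v 2 : EuclideanSpace ℝ (Fin 3))‖ ^ 2 := by
      gcongr <;> exact hsq _
    linarith
  have hcov : 4 * √2 ≤ ZLattice.covolume L :=
    le_of_pow_le_pow_left₀ two_ne_zero (ZLattice.covolume_pos L).le hcov_sq
  refine ⟨hcov, ?_⟩
  calc 4 * π / 3 / ZLattice.covolume L ≤ 4 * π / 3 / (4 * √2) := by gcongr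
    _ = π / √18 := by
      rw [show (18 : ℝ) = 3 ^ 2 * 2 by norm_num, sqrt_mul (by norm_num), sqrt_sq (by norm_num)]
      field_simp
end
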